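/- arXiv:2405.15963 — 2 statements merged into one kernel-verified Lean document; each statement's English description precedes it below -/
import Mathlib

section
/- Let s_1, ..., s_N be strictly positive natural numbers with sum S. Then the sum over i from 1 to N of s_i / (s_1 + ... + s_i) is at most the harmonic number H_S = 1 + 1/2 + ... + 1/S. -/
/-!
With prefix sums `P_i = s_1 + ⋯ + s_i`, the term `s_i / P_i` is at most `∑ 1/k` over the block
`P_{i-1} < k ≤ P_i`, since each of its `s_i` summands is at least `1 / P_i`; these blocks tile
`1, …, S`.
-/

open Finset

lemma div_add_le_sum_one_div {T : ℝ} (hT : 0 ≤ T) (m : ℕ) :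
    (m : ℝ) / (T + m) ≤ ∑ k ∈ range m, 1 / (T + k + 1) := by
  have hterm : ∀ k ∈ range m, 1 / (T + m) ≤ 1 / (T + k + 1) := by
    intro k hk
    have hkm : (k : ℝ) + 1 ≤ m := by exact_mod_cast mem_range.mp hk
    exact one_div_le_one_div_of_le (by positivity) (by linarith)
  calc (m : ℝ) / (T + m) = #(range m) • (1 / (T + m)) := by
        rw [card_range, nsmul_eq_mul, mul_one_div]
    _ ≤ ∑ k ∈ range m, 1 / (T + k + 1) := card_nsmul_le_sum _ _ _ hterm

theorem sum_div_partial_sum_le_harmonic (N : ℕ) (s : ℕ → ℕ) :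
    ∑ i ∈ range N, (s i : ℝ) / (∑ j ∈ range (i + 1), (s j : ℝ)) ≤
      ∑ k ∈ range (∑ i ∈ range N, s i), (1 : ℝ) / (k + 1) := by
  induction N with
  | zero => simp
  | succ n ih =>
    set T := ∑ i ∈ range n, s i
    have hblock : (s n : ℝ) / (∑ j ∈ range (n + 1), (s j : ℝ)) ≤
        ∑ k ∈ range (s n), (1 : ℝ) / ((T + k : ℕ) + 1) := by
      push_cast [T, sum_range_succ]
      exact div_add_le_sum_one_div (by positivity) (s n)
    calc _ = ∑ i ∈ range n, (s i : ℝ) / (∑ j ∈ range (i + 1), (s j : ℝ)) +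
            (s n : ℝ) / (∑ j ∈ range (n + 1), (s j : ℝ)) := sum_range_succ _ _
      _ ≤ ∑ k ∈ range T, (1 : ℝ) / (k + 1) + ∑ k ∈ range (s n), (1 : ℝ) / ((T + k : ℕ) + 1) :=
        add_le_add ih hblock
      _ = _ := by rw [sum_range_succ s, sum_range_add]

theorem stmt_0_general (N S : ℕ) (s : ℕ → ℕ)
    (hS : S = ∑ i ∈ Finset.range N, s i) :
    ∑ i ∈ Finset.range N, (s i : ℝ) / (∑ j ∈ Finset.range (i + 1), (s j : ℝ)) ≤
      ∑ k ∈ Finset.range S, (1 : ℝ) / (k + 1) :=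
  hS ▸ sum_div_partial_sum_le_harmonic N s

/-- Harmonic-sum bound: for strictly positive naturals `s 0, …, s (N-1)` with sum `S`,
the sum of `s i / (s 0 + … + s i)` is at most the harmonic number `H_S`. -/
theorem stmt_0 (N S : ℕ) (s : ℕ → ℕ) (hs : ∀ i < N, 0 < s i)
    (hS : S = ∑ i ∈ Finset.range N, s i) :
    ∑ i ∈ Finset.range N, (s i : ℝ) / (∑ j ∈ Finset.range (i + 1), (s j : ℝ)) ≤
      ∑ k ∈ Finset.range S, (1 : ℝ) / (k + 1) :=
  stmt_0_general N S s hS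
end

section
/- Let s_2, ..., s_N be strictly positive natural numbers with sum S (summing from index 2), and assume s_2 ≥ 2. Then the sum over i from 3 to N of (s_{i-1}·s_i) / C(s_2 + ... + s_i, 2) is at most 2·H_S, where C(m,2) = m(m-1)/2 and H_S is the S-th harmonic number. -/
/-!
With `P i = s 2 + ⋯ + s i` we have `s (i-1) + s i ≤ P i`, which bounds the `i`-th term
by `2 s i / P i`. That is at most twice the block `∑_{P (i-1) ≤ k < P i} 1/(k+1)` of the harmonic
sum, and the blocks for consecutive `i` tile `[0, S)`.
-/

open Finset

lemma mul_div_choose_two_le {a p : ℕ} (b : ℕ) (hap : a ≤ p) :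
    (a * b : ℝ) / ((p + b).choose 2 : ℝ) ≤ 2 * ((b : ℝ) / (p + b : ℕ)) := by
  rcases Nat.eq_zero_or_pos b with rfl | hb
  · simp
  rcases lt_or_ge (p + b) 2 with hm | hm
  · rw [Nat.choose_eq_zero_of_lt hm, Nat.cast_zero, div_zero]
    positivity
  have hm' : (2 : ℝ) ≤ (p + b : ℕ) := by exact_mod_cast hm
  have ha : (a : ℝ) + 1 ≤ (p + b : ℕ) := by exact_mod_cast (by omega : a + 1 ≤ p + b)
  rw [Nat.cast_choose_two, mul_div_assoc', div_le_div_iff₀ (by nlinarith) (by positivity)]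
  have : (0 : ℝ) ≤ b * (p + b : ℕ) := by positivity
  nlinarith

lemma div_le_sum_Ico_inv (p b : ℕ) :
    (b : ℝ) / (p + b : ℕ) ≤ ∑ k ∈ Ico p (p + b), (1 : ℝ) / (k + 1) := by
  have hlow : ∀ k ∈ Ico p (p + b), (1 : ℝ) / (p + b : ℕ) ≤ 1 / (k + 1) := fun k hk => by
    apply one_div_le_one_div_of_le (by positivity)
    exact_mod_cast (mem_Ico.mp hk).2
  simpa [div_eq_mul_one_div (b : ℝ)] using card_nsmul_le_sum _ _ _ hlow

lemma sum_Icc_sum_Ico_eq_sum_Ico {M : Type*} [AddCommMonoid M] {P : ℕ → ℕ} (hP : Monotone P)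
    (f : ℕ → M) (n : ℕ) :
    ∑ i ∈ Icc 1 n, ∑ k ∈ Ico (P (i - 1)) (P i), f k = ∑ k ∈ Ico (P 0) (P n), f k := by
  induction n with
  | zero => simp
  | succ n ih =>
    rw [sum_Icc_succ_top (by omega), ih, Nat.add_sub_cancel,
      sum_Ico_consecutive _ (hP n.zero_le) (hP n.le_succ)]

theorem stmt_2_general (N S : ℕ) (s : ℕ → ℕ)
    (hS : S = ∑ i ∈ Finset.Icc 2 N, s i) :
    ∑ i ∈ Finset.Icc 3 N,
        ((s (i - 1) : ℝ) * (s i : ℝ)) / ((∑ j ∈ Finset.Icc 2 i, s j).choose 2 : ℝ) ≤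
      2 * ∑ k ∈ Finset.range S, (1 : ℝ) / (k + 1) := by
  set P : ℕ → ℕ := fun i => ∑ j ∈ Icc 2 i, s j
  have hP : Monotone P := fun a b hab => sum_le_sum_of_subset (Icc_subset_Icc_right hab)
  have hP_succ : ∀ i, 2 ≤ i → P i = P (i - 1) + s i := fun i hi => by
    obtain ⟨j, rfl⟩ : ∃ j, i = j + 1 := ⟨i - 1, by omega⟩
    exact sum_Icc_succ_top (by omega) s
  have hs_le : ∀ i, 2 ≤ i → s i ≤ P i := fun i hi =>
    single_le_sum (fun _ _ => Nat.zero_le _) (mem_Icc.mpr ⟨hi, le_rfl⟩)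
  calc ∑ i ∈ Icc 3 N, (s (i - 1) * s i : ℝ) / ((P i).choose 2 : ℝ)
      ≤ ∑ i ∈ Icc 3 N, 2 * ∑ k ∈ Ico (P (i - 1)) (P i), (1 : ℝ) / (k + 1) := by
        refine sum_le_sum fun i hi => ?_
        have hi3 := (mem_Icc.mp hi).1
        rw [hP_succ i (by omega)]
        exact (mul_div_choose_two_le _ (hs_le _ (by omega))).trans
          (by gcongr; exact div_le_sum_Ico_inv _ _)
    _ ≤ ∑ i ∈ Icc 1 N, 2 * ∑ k ∈ Ico (P (i - 1)) (P i), (1 : ℝ) / (k + 1) :=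
        sum_le_sum_of_subset_of_nonneg (Icc_subset_Icc_left (by norm_num))
          fun _ _ _ => by positivity
    _ = 2 * ∑ k ∈ range S, (1 : ℝ) / (k + 1) := by
        rw [← mul_sum, sum_Icc_sum_Ico_eq_sum_Ico hP, hS, range_eq_Ico]
        rfl

/-- For strictly positive naturals `s 2, …, s N` with sum `S` and `s 2 ≥ 2`,
the sum over `i` from `3` to `N` of `s (i-1) · s i / C(s 2 + … + s i, 2)`
is at most `2 · H_S`. -/
theorem stmt_2 (N S : ℕ) (s : ℕ → ℕ) (hs : ∀ i, 2 ≤ i → i ≤ N → 0 < s i) (h2 : 2 ≤ s 2)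
    (hS : S = ∑ i ∈ Finset.Icc 2 N, s i) :
    ∑ i ∈ Finset.Icc 3 N,
        ((s (i - 1) : ℝ) * (s i : ℝ)) / ((∑ j ∈ Finset.Icc 2 i, s j).choose 2 : ℝ) ≤
      2 * ∑ k ∈ Finset.range S, (1 : ℝ) / (k + 1) :=
  stmt_2_general N S s hS
end
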